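/- arXiv:1504.04428 — 2 statements merged into one kernel-verified Lean document; each statement's English description precedes it below -/
import Mathlib

section
/- In the nonuniform-channel setting, the Bellman operator preserves ⊵-monotonicity: if V : 𝒬 → ℝ is ⊵-monotone (Q² ⊵ Q¹ implies V(Q²) ≥ V(Q¹)), then T V is ⊵-monotone, i.e., Q² ⊵ Q¹ implies (T V)(Q²) ≥ (T V)(Q¹). (This is the induction step proving the partial monotonicity of the value function, Lemma 5 of the paper.) -/
open Finset

/-- State space of the nonuniform-channel multicast MDP: request queue matrices capped
by `N`. -/
def QS (M K : ℕ) (N : Fin M → Fin K → ℕ) : Type :=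
  {Q : Fin M → Fin K → ℕ // ∀ m k, Q m k ≤ N m k}

/-- Next state when content `u` is multicast in state `Q` and arrival `a` occurs. -/
def nextQ {M K : ℕ} {N : Fin M → Fin K → ℕ} (Q : QS M K N) (u : Fin M)
    (a : Fin M → Fin K → ℕ) : QS M K N :=
  ⟨fun m k => min ((if m = u then 0 else Q.1 m k) + a m k) (N m k),
    fun _ _ => min_le_right _ _⟩

/-- Power cost of multicasting with per-user power levels `pu` to the users with pending
requests in `q`: the maximum of `pu` over `{k : q k > 0}`, and `0` if this set is empty. -/
noncomputable def PCost {K : ℕ} (pu : Fin K → ℝ) (q : Fin K → ℕ) : ℝ :=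
  if h : (Finset.univ.filter fun k => 0 < q k).Nonempty then
    (Finset.univ.filter fun k => 0 < q k).sup' h pu
  else 0

/-- Per-stage cost in the nonuniform case. -/
noncomputable def gCost {M K : ℕ} {N : Fin M → Fin K → ℕ} (wp wf : ℝ)
    (p : Fin M → Fin K → ℝ) (f : Fin M → ℝ) (Q : QS M K N) (u : Fin M) : ℝ :=
  (∑ m, ∑ k, (Q.1 m k : ℝ)) + wp * PCost (p u) (Q.1 u) + wf * f u

/-- State-action cost function `J_V(Q,u)` in the nonuniform case. -/
noncomputable def JCost {M K : ℕ} {N : Fin M → Fin K → ℕ}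
    (𝒜 : Finset (Fin M → Fin K → ℕ)) (ρ : (Fin M → Fin K → ℕ) → ℝ)
    (wp wf : ℝ) (p : Fin M → Fin K → ℝ) (f : Fin M → ℝ)
    (V : QS M K N → ℝ) (Q : QS M K N) (u : Fin M) : ℝ :=
  gCost wp wf p f Q u + ∑ a ∈ 𝒜, ρ a * V (nextQ Q u a)

/-- The partial order `q² ⊵ q¹` on per-content request queue vectors. -/
def TriVec {K : ℕ} (q₂ q₁ : Fin K → ℕ) : Prop :=
  ∀ k : Fin K,
    ((∃ j, k ≤ j ∧ 0 < q₁ j) → q₁ k ≤ q₂ k) ∧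
    ((¬ ∃ j, k ≤ j ∧ 0 < q₁ j) → q₂ k = q₁ k)

/-- The partial order `Q² ⊵ Q¹` on states: `Q² m ⊵ Q¹ m` for every content `m`. -/
def TriState {M K : ℕ} {N : Fin M → Fin K → ℕ} (Q₂ Q₁ : QS M K N) : Prop :=
  ∀ m, TriVec (Q₂.1 m) (Q₁.1 m)

/-- Bellman operator `(T V)(Q) = min_u J_V(Q,u)` in the nonuniform case. -/
noncomputable def TBell {M K : ℕ} (hM : 1 ≤ M) {N : Fin M → Fin K → ℕ}
    (𝒜 : Finset (Fin M → Fin K → ℕ)) (ρ : (Fin M → Fin K → ℕ) → ℝ)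
    (wp wf : ℝ) (p : Fin M → Fin K → ℝ) (f : Fin M → ℝ)
    (V : QS M K N → ℝ) (Q : QS M K N) : ℝ :=
  haveI : Nonempty (Fin M) := Fin.pos_iff_nonempty.mp hM
  Finset.univ.inf' Finset.univ_nonempty (fun u => JCost 𝒜 ρ wp wf p f V Q u)

lemma triVec_le {K : ℕ} {q₂ q₁ : Fin K → ℕ} (h : TriVec q₂ q₁) (k : Fin K) :
    q₁ k ≤ q₂ k := by
  by_cases hj : ∃ j, k ≤ j ∧ 0 < q₁ j
  · exact (h k).1 hj
  · exact ((h k).2 hj).ge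

lemma triVec_refl {K : ℕ} (q : Fin K → ℕ) : TriVec q q :=
  fun _ => ⟨fun _ => le_rfl, fun _ => rfl⟩

lemma pcost_eq {K : ℕ} (pu : Fin K → ℝ) (hpu : Monotone pu)
    {q₂ q₁ : Fin K → ℕ} (h : TriVec q₂ q₁) :
    PCost pu q₂ = PCost pu q₁ := by
  by_cases h₁ : (Finset.univ.filter fun k => 0 < q₁ k).Nonempty
  · set k0 := (Finset.univ.filter fun k => 0 < q₁ k).max' h₁ with hk0
    have hk0mem : k0 ∈ Finset.univ.filter fun k => 0 < q₁ k := Finset.max'_mem _ h₁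
    have hk0pos : 0 < q₁ k0 := (Finset.mem_filter.mp hk0mem).2
    have hk0pos2 : 0 < q₂ k0 := lt_of_lt_of_le hk0pos (triVec_le h k0)
    have hk0mem2 : k0 ∈ Finset.univ.filter fun k => 0 < q₂ k :=
      Finset.mem_filter.mpr ⟨Finset.mem_univ _, hk0pos2⟩
    have h₂ : (Finset.univ.filter fun k => 0 < q₂ k).Nonempty := ⟨k0, hk0mem2⟩
    have hbound : ∀ k ∈ Finset.univ.filter (fun k => 0 < q₂ k), k ≤ k0 := by
      intro k hk
      by_contra hlt
      push_neg at hlt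
      have hne : ¬ ∃ j, k ≤ j ∧ 0 < q₁ j := by
        rintro ⟨j, hkj, hj⟩
        have hjle : j ≤ k0 :=
          Finset.le_max' _ j (Finset.mem_filter.mpr ⟨Finset.mem_univ _, hj⟩)
        exact lt_irrefl k0 (lt_of_lt_of_le hlt (hkj.trans hjle))
      have heq := ((h k).2 hne)
      have hkpos : 0 < q₂ k := (Finset.mem_filter.mp hk).2
      have : k ∈ Finset.univ.filter fun k => 0 < q₁ k :=
        Finset.mem_filter.mpr ⟨Finset.mem_univ _, heq ▸ hkpos⟩
      exact lt_irrefl k0 (lt_of_lt_of_le hlt (Finset.le_max' _ k this))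
    rw [PCost, PCost, dif_pos h₁, dif_pos h₂]
    have e₁ : (Finset.univ.filter fun k => 0 < q₁ k).sup' h₁ pu = pu k0 :=
      le_antisymm (Finset.sup'_le _ _ fun k hk => hpu (Finset.le_max' _ k hk))
        (Finset.le_sup' pu hk0mem)
    have e₂ : (Finset.univ.filter fun k => 0 < q₂ k).sup' h₂ pu = pu k0 :=
      le_antisymm (Finset.sup'_le _ _ fun k hk => hpu (hbound k hk))
        (Finset.le_sup' pu hk0mem2)
    rw [e₁, e₂]
  · have hq : q₂ = q₁ := by
      funext k
      refine (h k).2 ?_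
      rintro ⟨j, _, hj⟩
      exact h₁ ⟨j, Finset.mem_filter.mpr ⟨Finset.mem_univ _, hj⟩⟩
    rw [hq]

lemma nextQ_tri {M K : ℕ} {N : Fin M → Fin K → ℕ} {Q₂ Q₁ : QS M K N}
    (h : TriState Q₂ Q₁) (u : Fin M) (a : Fin M → Fin K → ℕ) :
    TriState (nextQ Q₂ u a) (nextQ Q₁ u a) := by
  intro m
  by_cases hm : m = u
  · have : (nextQ Q₂ u a).1 m = (nextQ Q₁ u a).1 m := by
      funext k; simp [nextQ, hm]
    rw [this]; exact triVec_refl _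
  · intro k
    constructor
    · intro _
      have hle := triVec_le (h m) k
      simp only [nextQ, hm, if_false]
      exact min_le_min (by omega) le_rfl
    · intro hne
      have key : ¬ ∃ j, k ≤ j ∧ 0 < Q₁.1 m j := by
        rintro ⟨j, hkj, hj⟩
        refine hne ⟨j, hkj, ?_⟩
        have hN := Q₁.2 m j
        simp only [nextQ, hm, if_false]
        omega
      have heq := ((h m) k).2 key
      simp only [nextQ, hm, if_false, heq]

/-- The Bellman operator of the nonuniform case preserves `⊵`-monotonicity (induction
step for Lemma 5). -/
theorem bellman_preserves_tri_monotone
    {M K : ℕ} (hM : 1 ≤ M) (hK : 1 ≤ K) (N : Fin M → Fin K → ℕ)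
    (𝒜 : Finset (Fin M → Fin K → ℕ)) (ρ : (Fin M → Fin K → ℕ) → ℝ)
    (hρ0 : ∀ a ∈ 𝒜, 0 ≤ ρ a) (hρ1 : ∑ a ∈ 𝒜, ρ a = 1)
    (wp wf : ℝ) (p : Fin M → Fin K → ℝ) (f : Fin M → ℝ)
    (hp0 : ∀ m k, 0 ≤ p m k) (hpmono : ∀ m, Monotone (p m))
    (V : QS M K N → ℝ)
    (hV : ∀ Q₁ Q₂ : QS M K N, TriState Q₂ Q₁ → V Q₁ ≤ V Q₂) :
    ∀ Q₁ Q₂ : QS M K N, TriState Q₂ Q₁ →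
      TBell hM 𝒜 ρ wp wf p f V Q₁ ≤ TBell hM 𝒜 ρ wp wf p f V Q₂ := by
  intro Q₁ Q₂ h
  haveI : Nonempty (Fin M) := Fin.pos_iff_nonempty.mp hM
  unfold TBell
  apply Finset.le_inf'
  intro u _
  refine le_trans (Finset.inf'_le _ (Finset.mem_univ u)) ?_
  unfold JCost gCost
  have hsum : ∑ m, ∑ k, (Q₁.1 m k : ℝ) ≤ ∑ m, ∑ k, (Q₂.1 m k : ℝ) :=
    Finset.sum_le_sum fun m _ => Finset.sum_le_sum fun k _ =>
      Nat.cast_le.mpr (triVec_le (h m) k)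
  have hP : PCost (p u) (Q₂.1 u) = PCost (p u) (Q₁.1 u) :=
    pcost_eq (p u) (hpmono u) (h u)
  have hE : ∑ a ∈ 𝒜, ρ a * V (nextQ Q₁ u a) ≤ ∑ a ∈ 𝒜, ρ a * V (nextQ Q₂ u a) :=
    Finset.sum_le_sum fun a ha =>
      mul_le_mul_of_nonneg_left (hV _ _ (nextQ_tri h u a)) (hρ0 a ha)
  rw [hP]
  linarith
end

section
/- In the nonuniform-channel setting, every iterate of the relative value iteration algorithm is ⊵-monotone: fix any reference state Q§ ∈ 𝒬 and define V₀(Q) = 0 for all Q and V_{n+1}(Q) = (T V_n)(Q) − (T V_n)(Q§). Then for every n ≥ 0 and all Q¹, Q² ∈ 𝒬 with Q² ⊵ Q¹, V_n(Q²) ≥ V_n(Q¹). (This is the inductive claim establishing Lemma 5 of the paper, the partial monotonicity of the value function.) -/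
open Finset

/-- Iterates of the relative value iteration algorithm with reference state `Qref`:
`V₀ = 0` and `V_{n+1}(Q) = (T V_n)(Q) - (T V_n)(Qref)`. -/
noncomputable def Vseq {M K : ℕ} (hM : 1 ≤ M) {N : Fin M → Fin K → ℕ}
    (𝒜 : Finset (Fin M → Fin K → ℕ)) (ρ : (Fin M → Fin K → ℕ) → ℝ)
    (wp wf : ℝ) (p : Fin M → Fin K → ℝ) (f : Fin M → ℝ)
    (Qref : QS M K N) : ℕ → QS M K N → ℝ
  | 0 => fun _ => 0
  | n + 1 => fun Q =>
      TBell hM 𝒜 ρ wp wf p f (Vseq hM 𝒜 ρ wp wf p f Qref n) Q -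
        TBell hM 𝒜 ρ wp wf p f (Vseq hM 𝒜 ρ wp wf p f Qref n) Qref

section TriVec

variable {K : ℕ} {q₁ q₂ : Fin K → ℕ}

theorem TriVec.le (h : TriVec q₂ q₁) (k : Fin K) : q₁ k ≤ q₂ k := by
  by_cases hk : ∃ j, k ≤ j ∧ 0 < q₁ j
  · exact (h k).1 hk
  · exact ((h k).2 hk).ge

theorem PCost_eq_of_last_pos {pu : Fin K → ℝ} (hpu : Monotone pu) {q : Fin K → ℕ} {k : Fin K}
    (hk : 0 < q k) (hlast : ∀ j, 0 < q j → j ≤ k) : PCost pu q = pu k := by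
  have hk' : k ∈ univ.filter fun j => 0 < q j := mem_filter.mpr ⟨mem_univ k, hk⟩
  rw [PCost, dif_pos ⟨k, hk'⟩]
  exact le_antisymm (sup'_le _ _ fun j hj => hpu (hlast j (mem_filter.mp hj).2))
    (le_sup' pu hk')

theorem PCost_eq_of_triVec {pu : Fin K → ℝ} (hpu : Monotone pu) (h : TriVec q₂ q₁) :
    PCost pu q₂ = PCost pu q₁ := by
  by_cases hne : (univ.filter fun j => 0 < q₁ j).Nonempty
  · set k := (univ.filter fun j => 0 < q₁ j).max' hne
    have hk : 0 < q₁ k := (mem_filter.mp (max'_mem _ hne)).2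
    have hlast₁ : ∀ j, 0 < q₁ j → j ≤ k := fun j hj =>
      le_max' _ j (mem_filter.mpr ⟨mem_univ j, hj⟩)
    have hlast₂ : ∀ j, 0 < q₂ j → j ≤ k := by
      intro j hj
      by_contra! hkj
      have hnone : ¬ ∃ i, j ≤ i ∧ 0 < q₁ i := fun ⟨i, hji, hi⟩ =>
        (hkj.trans_le hji).not_ge (hlast₁ i hi)
      have hj₁ : ¬ 0 < q₁ j := fun hj₁ => hnone ⟨j, le_rfl, hj₁⟩
      rw [(h j).2 hnone] at hj
      exact hj₁ hj
    rw [PCost_eq_of_last_pos hpu (hk.trans_le (h.le k)) hlast₂, PCost_eq_of_last_pos hpu hk hlast₁]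
  · have hq : q₂ = q₁ := funext fun k => (h k).2 fun ⟨j, _, hj⟩ =>
      hne ⟨j, mem_filter.mpr ⟨mem_univ j, hj⟩⟩
    rw [hq]

end TriVec

section TriState

variable {M K : ℕ} {N : Fin M → Fin K → ℕ}

def TriMonotone (V : QS M K N → ℝ) : Prop :=
  ∀ Q₁ Q₂ : QS M K N, TriState Q₂ Q₁ → V Q₁ ≤ V Q₂

theorem TriState.nextQ {Q₁ Q₂ : QS M K N} (h : TriState Q₂ Q₁) (u : Fin M)
    (a : Fin M → Fin K → ℕ) : TriState (nextQ Q₂ u a) (nextQ Q₁ u a) := by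
  intro m k
  by_cases hmu : m = u
  · simp only [_root_.nextQ, hmu]
    exact ⟨fun _ => le_rfl, fun _ => rfl⟩
  · simp only [_root_.nextQ, if_neg hmu]
    refine ⟨fun _ => min_le_min_right _ (Nat.add_le_add_right ((h m).le k) _), fun hnone => ?_⟩
    have hnone₁ : ¬ ∃ j, k ≤ j ∧ 0 < Q₁.1 m j := fun ⟨j, hkj, hj⟩ =>
      hnone ⟨j, hkj, lt_min (hj.trans_le (Nat.le_add_right _ _)) (hj.trans_le (Q₁.2 m j))⟩
    rw [(h m k).2 hnone₁]

theorem gCost_le_of_triState {wp wf : ℝ} {p : Fin M → Fin K → ℝ} (hp : ∀ m, Monotone (p m))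
    (f : Fin M → ℝ) {Q₁ Q₂ : QS M K N} (h : TriState Q₂ Q₁) (u : Fin M) :
    gCost wp wf p f Q₁ u ≤ gCost wp wf p f Q₂ u := by
  have hsum : ∑ m, ∑ k, (Q₁.1 m k : ℝ) ≤ ∑ m, ∑ k, (Q₂.1 m k : ℝ) :=
    sum_le_sum fun m _ => sum_le_sum fun k _ => Nat.cast_le.mpr ((h m).le k)
  rw [gCost, gCost, PCost_eq_of_triVec (hp u) (h u)]
  linarith

theorem TBell_triMonotone (hM : 1 ≤ M) {𝒜 : Finset (Fin M → Fin K → ℕ)}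
    {ρ : (Fin M → Fin K → ℕ) → ℝ} (hρ : ∀ a ∈ 𝒜, 0 ≤ ρ a) {wp wf : ℝ}
    {p : Fin M → Fin K → ℝ} (hp : ∀ m, Monotone (p m)) (f : Fin M → ℝ)
    {V : QS M K N → ℝ} (hV : TriMonotone V) : TriMonotone (TBell hM 𝒜 ρ wp wf p f V) := by
  intro Q₁ Q₂ h
  refine le_inf' _ _ fun u hu => (inf'_le _ hu).trans ?_
  exact add_le_add (gCost_le_of_triState hp f h u) (sum_le_sum fun a ha =>
    mul_le_mul_of_nonneg_left (hV _ _ (h.nextQ u a)) (hρ a ha))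

end TriState

theorem rvia_iterates_tri_monotone_general
    {M K : ℕ} (hM : 1 ≤ M) (N : Fin M → Fin K → ℕ)
    (𝒜 : Finset (Fin M → Fin K → ℕ)) (ρ : (Fin M → Fin K → ℕ) → ℝ)
    (hρ0 : ∀ a ∈ 𝒜, 0 ≤ ρ a)
    (wp wf : ℝ) (p : Fin M → Fin K → ℝ) (f : Fin M → ℝ)
    (hpmono : ∀ m, Monotone (p m))
    (Qref : QS M K N) :
    ∀ (n : ℕ) (Q₁ Q₂ : QS M K N), TriState Q₂ Q₁ →
      Vseq hM 𝒜 ρ wp wf p f Qref n Q₁ ≤ Vseq hM 𝒜 ρ wp wf p f Qref n Q₂ := by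
  intro n
  induction n with
  | zero => intro _ _ _; exact le_rfl
  | succ n ih =>
    intro Q₁ Q₂ h
    exact sub_le_sub_right (TBell_triMonotone hM hρ0 hpmono f ih Q₁ Q₂ h) _

/-- Every iterate of relative value iteration in the nonuniform case is `⊵`-monotone
(inductive claim for Lemma 5). -/
theorem rvia_iterates_tri_monotone
    {M K : ℕ} (hM : 1 ≤ M) (hK : 1 ≤ K) (N : Fin M → Fin K → ℕ)
    (𝒜 : Finset (Fin M → Fin K → ℕ)) (ρ : (Fin M → Fin K → ℕ) → ℝ)
    (hρ0 : ∀ a ∈ 𝒜, 0 ≤ ρ a) (hρ1 : ∑ a ∈ 𝒜, ρ a = 1)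
    (wp wf : ℝ) (p : Fin M → Fin K → ℝ) (f : Fin M → ℝ)
    (hp0 : ∀ m k, 0 ≤ p m k) (hpmono : ∀ m, Monotone (p m))
    (Qref : QS M K N) :
    ∀ (n : ℕ) (Q₁ Q₂ : QS M K N), TriState Q₂ Q₁ →
      Vseq hM 𝒜 ρ wp wf p f Qref n Q₁ ≤ Vseq hM 𝒜 ρ wp wf p f Qref n Q₂ :=
  rvia_iterates_tri_monotone_general hM N 𝒜 ρ hρ0 wp wf p f hpmono Qref
end
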